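/- Let β > 0, c > 0 and R > 0. Then ∫_{B_R(0)} 16·β²·c²·|x|^{4β−2} · (1 + c·|x|^{2β})^{−2} dx = 16πβ·( log(1 + c·R^{2β}) − c·R^{2β}/(1 + c·R^{2β}) ), where the integral is over the open Euclidean ball B_R(0) ⊂ ℝ². (The integrand equals |∇φ(x)|² for the radial function φ(x) = −2·log(1 + c·|x|^{2β}) away from the origin.) -/

import Mathlib

/-! In polar coordinates the integral is `2π ∫₀ᴿ r |φ'(r)|² dr`. Writing `t = c r^{2β}` and
`g t = log (1 + t) - t / (1 + t)`, so that `g' t = t / (1 + t)²` and `g 0 = 0`, the radial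
integrand is exactly `8β · (d/dr) g (c r^{2β})`. This derivative is nonnegative, so the
fundamental theorem of calculus applies even when `4β - 1 < 0` and the integrand is unbounded
near `0`. -/

open MeasureTheory Real Set Metric Module

theorem setIntegral_ball_fun_norm_addHaar {E F : Type*} [NormedAddCommGroup E] [NormedSpace ℝ E]
    [Nontrivial E] [MeasurableSpace E] [BorelSpace E] [FiniteDimensional ℝ E] (μ : Measure E)
    [μ.IsAddHaarMeasure] [NormedAddCommGroup F] [NormedSpace ℝ F] (f : ℝ → F) {R : ℝ}
    (hR : 0 ≤ R) :
    ∫ x in ball (0 : E) R, f ‖x‖ ∂μ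
      = finrank ℝ E • μ.real (ball 0 1) • ∫ r in 0..R, r ^ (finrank ℝ E - 1) • f r := by
  have hball : ball (0 : E) R = (‖·‖) ⁻¹' Iio R := by ext; simp
  have hind : (((‖·‖) ⁻¹' Iio R).indicator fun x : E => f ‖x‖)
      = fun x => (Iio R).indicator f ‖x‖ :=
    funext fun x => indicator_comp_right (fun x : E => ‖x‖) (g := f)
  rw [← integral_indicator measurableSet_ball, hball, hind, integral_fun_norm_addHaar]
  simp_rw [← indicator_smul_apply (Iio R) (fun y : ℝ => y ^ (finrank ℝ E - 1)) f]
  rw [setIntegral_indicator measurableSet_Iio, Ioi_inter_Iio, ← integral_Ioc_eq_integral_Ioo,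
    intervalIntegral.integral_of_le hR]

theorem hasDerivAt_log_one_add_sub_div_one_add {t : ℝ} (ht : 0 < 1 + t) :
    HasDerivAt (fun s => log (1 + s) - s / (1 + s)) (t / (1 + t) ^ 2) t := by
  have hone : HasDerivAt (fun s : ℝ => 1 + s) 1 t := (hasDerivAt_id t).const_add 1
  refine ((hone.log ht.ne').sub ((hasDerivAt_id t).div hone ht.ne')).congr_deriv ?_
  simp only [id_eq]
  field_simp
  ring

/-- `|φ'(r)|²` for the radial bubble `φ(r) = -2 log (1 + c r^{2β})`. -/
noncomputable def bubbleEnergyDensity (β c r : ℝ) : ℝ :=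
  16 * β ^ 2 * c ^ 2 * r ^ (4 * β - 2) / (1 + c * r ^ (2 * β)) ^ 2

theorem integral_mul_bubbleEnergyDensity {β c R : ℝ} (hβ : 0 < β) (hc : 0 ≤ c) (hR : 0 ≤ R) :
    ∫ r in 0..R, r * bubbleEnergyDensity β c r
      = 8 * β * (log (1 + c * R ^ (2 * β)) - c * R ^ (2 * β) / (1 + c * R ^ (2 * β))) := by
  set G : ℝ → ℝ := fun s => log (1 + s) - s / (1 + s)
  have hG : ∀ y, 0 ≤ y → 0 < 1 + c * y ^ (2 * β) := fun y hy => by positivity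
  have hderiv : ∀ y ∈ Ioo 0 R,
      HasDerivAt (fun y => 8 * β * G (c * y ^ (2 * β))) (y * bubbleEnergyDensity β c y) y := by
    intro y ⟨hy, _⟩
    have hu := (hasDerivAt_rpow_const (p := 2 * β) (Or.inl hy.ne')).const_mul c
    refine (((hasDerivAt_log_one_add_sub_div_one_add (hG y hy.le)).comp y hu).const_mul
      (8 * β)).congr_deriv ?_
    have hexp : y * y ^ (4 * β - 2) = y ^ (2 * β) * y ^ (2 * β - 1) := by
      rw [← rpow_add hy, mul_comm, ← rpow_add_one hy.ne']
      ring_nf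
    rw [bubbleEnergyDensity, mul_div_assoc', mul_left_comm y, hexp]
    ring
  have hcont : ContinuousOn (fun y => 8 * β * G (c * y ^ (2 * β))) (Icc 0 R) := by
    have hu : Continuous fun y : ℝ => c * y ^ (2 * β) :=
      continuous_const.mul (continuous_rpow_const (by positivity))
    have hne : ∀ y ∈ Icc 0 R, 1 + c * y ^ (2 * β) ≠ 0 := fun y hy => (hG y hy.1).ne'
    exact continuousOn_const.mul (((continuous_const.add hu).continuousOn.log hne).sub
      (hu.continuousOn.div (continuous_const.add hu).continuousOn hne))
  have hnonneg : ∀ y ∈ Ioo 0 R, 0 ≤ y * bubbleEnergyDensity β c y := fun y ⟨hy, _⟩ => by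
    unfold bubbleEnergyDensity
    positivity
  rw [intervalIntegral.integral_eq_sub_of_hasDerivAt_of_le hR hcont hderiv
    ((intervalIntegrable_iff_integrableOn_Ioc_of_le hR).2
      (intervalIntegral.integrableOn_deriv_of_nonneg hcont hderiv hnonneg))]
  simp [G, zero_rpow (by positivity : 2 * β ≠ 0)]

/-- for `β > 0`, `c > 0`, `R > 0`,
`∫_{B_R(0)} 16 β² c² |x|^{4β-2} (1 + c|x|^{2β})⁻² dx
  = 16πβ (log(1 + cR^{2β}) - cR^{2β}/(1 + cR^{2β}))`. -/
theorem stmt_3 (β c R : ℝ) (hβ : 0 < β) (hc : 0 < c) (hR : 0 < R) :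
    (∫ x in Metric.ball (0 : EuclideanSpace ℝ (Fin 2)) R,
      16 * β ^ 2 * c ^ 2 * ‖x‖ ^ (4 * β - 2) / (1 + c * ‖x‖ ^ (2 * β)) ^ 2)
    = 16 * π * β *
        (Real.log (1 + c * R ^ (2 * β)) - c * R ^ (2 * β) / (1 + c * R ^ (2 * β))) := by
  have hunit : volume.real (ball (0 : EuclideanSpace ℝ (Fin 2)) 1) = π := by
    simp [measureReal_def, pi_nonneg]
  calc _ = ∫ x in ball (0 : EuclideanSpace ℝ (Fin 2)) R, bubbleEnergyDensity β c ‖x‖ := rfl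
    _ = 2 * π * ∫ r in 0..R, r * bubbleEnergyDensity β c r := by
      rw [setIntegral_ball_fun_norm_addHaar volume _ hR.le, finrank_euclideanSpace_fin, hunit]
      norm_num [mul_assoc]
    _ = _ := by
      rw [integral_mul_bubbleEnergyDensity hβ hc.le hR.le]
      ring
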